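/- Let n ≥ 1, x_t, x_s, x_τ, β ∈ ℝⁿ, α ∈ ℝ, and σ > 0. Let U_r = x_r'β + α + ε_r for r ∈ {t, s, τ}, where ε_t, ε_s, ε_τ are independent, each distributed N(0, σ²). Then E[((U_t²U_s − U_s²U_t) + (U_s²U_τ − U_τ²U_s) + (U_τ²U_t − U_t²U_τ) − U_tU_s·(x_t − x_s)'β − U_sU_τ·(x_s − x_τ)'β − U_τU_t·(x_τ − x_t)'β)·1{U_t>0, U_s>0, U_τ>0}] = 0. -/

import Mathlib

open MeasureTheory

/-- Density of the normal distribution `N(μ, σ²)` on `ℝ`. -/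
noncomputable def normalPDF (μ σ u : ℝ) : ℝ :=
  (1 / (σ * Real.sqrt (2 * Real.pi))) * Real.exp (-(u - μ) ^ 2 / (2 * σ ^ 2))

/-!
Let `φ_r` be the `N(μ_r, σ²)` density, `μ_r = x_r'β + α`. Integration by parts gives the truncated
Stein identity `∫_{u>0} (u² - μ u - σ²) φ_μ(u) du = 0`. With `R_r(u) = u² - μ_r u - σ²`, the
polynomial in the integrand equals
`R_t(U_t)(U_s - U_τ) + R_s(U_s)(U_τ - U_t) + R_τ(U_τ)(U_t - U_s)`: the `σ²` terms cancel in the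
cyclic sum because the variance is common to the three periods. By independence every term of the
expanded integral then contains a factor `∫_{u>0} R_r φ_r = 0`.
-/

open Real Set

theorem hasDerivAt_normalPDF (μ σ u : ℝ) :
    HasDerivAt (normalPDF μ σ) (-(u - μ) / σ ^ 2 * normalPDF μ σ u) u := by
  have hexponent : HasDerivAt (fun u => -(u - μ) ^ 2 / (2 * σ ^ 2)) (-(u - μ) / σ ^ 2) u :=
    ((((hasDerivAt_id u).sub_const μ).pow 2).neg.div_const (2 * σ ^ 2)).congr_deriv (by
      simp only [id, Nat.cast_ofNat]; ring)
  exact (hexponent.exp.const_mul (1 / (σ * √(2 * π)))).congr_deriv (by rw [normalPDF]; ring)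

theorem integrable_pow_mul_normalPDF (k : ℕ) (μ : ℝ) {σ : ℝ} (hσ : 0 < σ) :
    Integrable (fun x : ℝ => x ^ k * normalPDF μ σ x) := by
  have hb : 0 < (2 * σ ^ 2)⁻¹ := by positivity
  have hcentered : Integrable (fun y : ℝ => (y + μ) ^ k * exp (-(2 * σ ^ 2)⁻¹ * y ^ 2)) := by
    simp_rw [add_pow, Finset.sum_mul]
    refine integrable_finsetSum _ fun i _ => ?_
    have := integrable_rpow_mul_exp_neg_mul_sq hb (s := i) (by linarith [i.cast_nonneg (α := ℝ)])
    simp only [rpow_natCast] at this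
    exact (this.mul_const (μ ^ (k - i) * k.choose i)).congr (ae_of_all _ fun y => by ring)
  refine ((hcentered.comp_sub_right μ).const_mul (1 / (σ * √(2 * π)))).congr
    (ae_of_all _ fun x => ?_)
  simp only [normalPDF, sub_add_cancel]
  ring_nf

theorem integrable_stein_residual_normalPDF (μ : ℝ) {σ : ℝ} (hσ : 0 < σ) :
    Integrable (fun u => (u ^ 2 - μ * u - σ ^ 2) * normalPDF μ σ u) := by
  have h k := integrable_pow_mul_normalPDF k μ hσ
  exact (((h 2).sub ((h 1).const_mul μ)).sub ((h 0).const_mul (σ ^ 2))).congr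
    (ae_of_all _ fun u => by simp only [Pi.sub_apply]; ring)

/-- `(u² - μ u - σ²) φ(u)` is the derivative of `-σ² u φ(u)`, which vanishes at infinity. -/
theorem integral_Ioi_stein_normalPDF (μ a : ℝ) {σ : ℝ} (hσ : 0 < σ) :
    ∫ u in Ioi a, (u ^ 2 - μ * u - σ ^ 2) * normalPDF μ σ u = σ ^ 2 * a * normalPDF μ σ a := by
  have hderiv : ∀ u, HasDerivAt (fun u => -σ ^ 2 * u * normalPDF μ σ u)
      ((u ^ 2 - μ * u - σ ^ 2) * normalPDF μ σ u) u := fun u =>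
    (((hasDerivAt_id' u).const_mul (-σ ^ 2)).mul (hasDerivAt_normalPDF μ σ u)).congr_deriv (by
      field_simp; ring)
  have hint := (integrable_stein_residual_normalPDF μ hσ).integrableOn (s := Ioi a)
  have hlim := tendsto_zero_of_hasDerivAt_of_integrableOn_Ioi (fun u _ => hderiv u) hint
    (((integrable_pow_mul_normalPDF 1 μ hσ).const_mul (-σ ^ 2)).integrableOn.congr_fun
      (fun u _ => by simp only [pow_one]; ring) measurableSet_Ioi)
  rw [integral_Ioi_of_hasDerivAt_of_tendsto' (fun u _ => hderiv u) hint hlim]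
  ring

structure SteinIdentity (ν : Measure ℝ) (μ s : ℝ) (f : ℝ → ℝ) : Prop where
  integrable : Integrable f ν
  integrable_id_mul : Integrable (fun u => u * f u) ν
  integrable_residual : Integrable (fun u => (u ^ 2 - μ * u - s) * f u) ν
  integral_residual : ∫ u, (u ^ 2 - μ * u - s) * f u ∂ν = 0

theorem steinIdentity_normalPDF (μ : ℝ) {σ : ℝ} (hσ : 0 < σ) :
    SteinIdentity (volume.restrict (Ioi 0)) μ (σ ^ 2) (normalPDF μ σ) where
  integrable := by simpa using (integrable_pow_mul_normalPDF 0 μ hσ).restrict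
  integrable_id_mul := by simpa using (integrable_pow_mul_normalPDF 1 μ hσ).restrict
  integrable_residual := (integrable_stein_residual_normalPDF μ hσ).restrict
  integral_residual := by simpa using integral_Ioi_stein_normalPDF μ 0 hσ

section TripleProduct

variable {α β γ : Type*} [MeasurableSpace α] [MeasurableSpace β] [MeasurableSpace γ]
  {μ : Measure α} {ν : Measure β} {ρ : Measure γ}

theorem integral_mul_prod_mul [SFinite μ] [SFinite ν] [SFinite ρ]
    (f : α → ℝ) (g : β → ℝ) (h : γ → ℝ) :
    ∫ p, f p.1 * (g p.2.1 * h p.2.2) ∂μ.prod (ν.prod ρ)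
      = (∫ x, f x ∂μ) * ((∫ y, g y ∂ν) * ∫ z, h z ∂ρ) := by
  rw [integral_prod_mul f (fun q : β × γ => g q.1 * h q.2), integral_prod_mul]

theorem Integrable.mul_prod_mul {f : α → ℝ} {g : β → ℝ} {h : γ → ℝ} (hf : Integrable f μ)
    (hg : Integrable g ν) (hh : Integrable h ρ) :
    Integrable (fun p => f p.1 * (g p.2.1 * h p.2.2)) (μ.prod (ν.prod ρ)) :=
  hf.mul_prod (hg.mul_prod hh)

end TripleProduct

theorem integral_cyclic_moment_eq_zero {ν₁ ν₂ ν₃ : Measure ℝ}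
    [SFinite ν₁] [SFinite ν₂] [SFinite ν₃] {a b c s : ℝ} {fa fb fc : ℝ → ℝ}
    (ha : SteinIdentity ν₁ a s fa) (hb : SteinIdentity ν₂ b s fb) (hc : SteinIdentity ν₃ c s fc) :
    ∫ p, ((p.1 ^ 2 * p.2.1 - p.2.1 ^ 2 * p.1)
            + (p.2.1 ^ 2 * p.2.2 - p.2.2 ^ 2 * p.2.1)
            + (p.2.2 ^ 2 * p.1 - p.1 ^ 2 * p.2.2)
            - p.1 * p.2.1 * (a - b) - p.2.1 * p.2.2 * (b - c) - p.2.2 * p.1 * (c - a))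
          * (fa p.1 * (fb p.2.1 * fc p.2.2)) ∂ν₁.prod (ν₂.prod ν₃) = 0 := by
  let R (μ : ℝ) (f : ℝ → ℝ) (u : ℝ) := (u ^ 2 - μ * u - s) * f u
  let F (f : ℝ → ℝ) (u : ℝ) := u * f u
  let T (f g h : ℝ → ℝ) (p : ℝ × ℝ × ℝ) := f p.1 * (g p.2.1 * h p.2.2)
  have h₁ : Integrable (T (R a fa) (F fb) fc) (ν₁.prod (ν₂.prod ν₃)) :=
    Integrable.mul_prod_mul ha.integrable_residual hb.integrable_id_mul hc.integrable
  have h₂ : Integrable (T (R a fa) fb (F fc)) (ν₁.prod (ν₂.prod ν₃)) :=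
    Integrable.mul_prod_mul ha.integrable_residual hb.integrable hc.integrable_id_mul
  have h₃ : Integrable (T fa (R b fb) (F fc)) (ν₁.prod (ν₂.prod ν₃)) :=
    Integrable.mul_prod_mul ha.integrable hb.integrable_residual hc.integrable_id_mul
  have h₄ : Integrable (T (F fa) (R b fb) fc) (ν₁.prod (ν₂.prod ν₃)) :=
    Integrable.mul_prod_mul ha.integrable_id_mul hb.integrable_residual hc.integrable
  have h₅ : Integrable (T (F fa) fb (R c fc)) (ν₁.prod (ν₂.prod ν₃)) :=
    Integrable.mul_prod_mul ha.integrable_id_mul hb.integrable hc.integrable_residual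
  have h₆ : Integrable (T fa (F fb) (R c fc)) (ν₁.prod (ν₂.prod ν₃)) :=
    Integrable.mul_prod_mul ha.integrable hb.integrable_id_mul hc.integrable_residual
  calc _ = ∫ p, (T (R a fa) (F fb) fc - T (R a fa) fb (F fc) + T fa (R b fb) (F fc)
          - T (F fa) (R b fb) fc + T (F fa) fb (R c fc) - T fa (F fb) (R c fc)) p
          ∂ν₁.prod (ν₂.prod ν₃) :=
        integral_congr_ae (ae_of_all _ fun p => by
          simp only [T, R, F, Pi.add_apply, Pi.sub_apply]; ring)
    _ = 0 := by
      rw [integral_sub' ((((h₁.sub h₂).add h₃).sub h₄).add h₅) h₆,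
        integral_add' (((h₁.sub h₂).add h₃).sub h₄) h₅,
        integral_sub' ((h₁.sub h₂).add h₃) h₄, integral_add' (h₁.sub h₂) h₃,
        integral_sub' h₁ h₂]
      simp only [T, integral_mul_prod_mul]
      simp only [R, ha.integral_residual, hb.integral_residual, hc.integral_residual]
      ring

theorem panel_tobit_three_period_moment_general (n : ℕ)
    (xt xs xτ β : Fin n → ℝ) (α : ℝ) (σ : ℝ) (hσ : 0 < σ) :
    ∫ p in Set.Ioi (0 : ℝ) ×ˢ (Set.Ioi (0 : ℝ) ×ˢ Set.Ioi (0 : ℝ)),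
        ((p.1 ^ 2 * p.2.1 - p.2.1 ^ 2 * p.1)
            + (p.2.1 ^ 2 * p.2.2 - p.2.2 ^ 2 * p.2.1)
            + (p.2.2 ^ 2 * p.1 - p.1 ^ 2 * p.2.2)
            - p.1 * p.2.1 * (∑ i, (xt i - xs i) * β i)
            - p.2.1 * p.2.2 * (∑ i, (xs i - xτ i) * β i)
            - p.2.2 * p.1 * (∑ i, (xτ i - xt i) * β i))
          * (normalPDF (∑ i, xt i * β i + α) σ p.1
              * (normalPDF (∑ i, xs i * β i + α) σ p.2.1
                  * normalPDF (∑ i, xτ i * β i + α) σ p.2.2)) = 0 := by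
  have hdiff (x y : Fin n → ℝ) :
      ∑ i, (x i - y i) * β i = (∑ i, x i * β i + α) - (∑ i, y i * β i + α) := by
    simp only [sub_mul, Finset.sum_sub_distrib]
    ring
  rw [Measure.volume_eq_prod, ← Measure.prod_restrict, Measure.volume_eq_prod,
    ← Measure.prod_restrict, hdiff xt xs, hdiff xs xτ, hdiff xτ xt]
  exact integral_cyclic_moment_eq_zero (steinIdentity_normalPDF _ hσ)
    (steinIdentity_normalPDF _ hσ) (steinIdentity_normalPDF _ hσ)

/-- Moment condition (Estm_h2) for the fixed-effects panel Tobit model with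
individual-specific variance: with `U_r ~ N(x_r'β + α, σ²)`, `r ∈ {t, s, τ}`, independent,
the cyclic sum over three periods eliminates both `α` and `σ²`:
`E[((U_t²U_s − U_s²U_t) + (U_s²U_τ − U_τ²U_s) + (U_τ²U_t − U_t²U_τ)
   − U_tU_s(x_t − x_s)'β − U_sU_τ(x_s − x_τ)'β − U_τU_t(x_τ − x_t)'β)·1{U_t>0,U_s>0,U_τ>0}] = 0`. -/
theorem panel_tobit_three_period_moment (n : ℕ) (hn : 1 ≤ n)
    (xt xs xτ β : Fin n → ℝ) (α : ℝ) (σ : ℝ) (hσ : 0 < σ) :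
    ∫ p in Set.Ioi (0 : ℝ) ×ˢ (Set.Ioi (0 : ℝ) ×ˢ Set.Ioi (0 : ℝ)),
        ((p.1 ^ 2 * p.2.1 - p.2.1 ^ 2 * p.1)
            + (p.2.1 ^ 2 * p.2.2 - p.2.2 ^ 2 * p.2.1)
            + (p.2.2 ^ 2 * p.1 - p.1 ^ 2 * p.2.2)
            - p.1 * p.2.1 * (∑ i, (xt i - xs i) * β i)
            - p.2.1 * p.2.2 * (∑ i, (xs i - xτ i) * β i)
            - p.2.2 * p.1 * (∑ i, (xτ i - xt i) * β i))
          * (normalPDF (∑ i, xt i * β i + α) σ p.1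
              * (normalPDF (∑ i, xs i * β i + α) σ p.2.1
                  * normalPDF (∑ i, xτ i * β i + α) σ p.2.2)) = 0 :=
  panel_tobit_three_period_moment_general n xt xs xτ β α σ hσ
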